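/- Let Γ be a finite group and let {Γ₁} ∪ 𝒜 be a nontrivial Frobenius partition of Γ. Then Γ₁ is a nontrivial subgroup of Γ (Γ₁ ≠ {1}). -/

import Mathlib

/-- The conjugate subgroup `g⁻¹ A g` of a subgroup `A`. -/
def ConjSubgroup {Γ : Type*} [Group Γ] (g : Γ) (A : Subgroup Γ) : Subgroup Γ :=
  Subgroup.map (MulAut.conj g⁻¹).toMonoidHom A

/-- A subgroup `A` is malnormal if for every `g ∉ A` the intersection `A ∩ g⁻¹Ag` is trivial. -/
def Malnormal {Γ : Type*} [Group Γ] (A : Subgroup Γ) : Prop :=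
  ∀ g : Γ, g ∉ A → A ⊓ ConjSubgroup g A = ⊥

/-- A collection of subgroups is a partition of the group if every non-identity element
lies in exactly one subgroup of the collection. -/
def IsGroupPartition {Γ : Type*} [Group Γ] (P : Set (Subgroup Γ)) : Prop :=
  ∀ x : Γ, x ≠ 1 → ∃! A : Subgroup Γ, A ∈ P ∧ x ∈ A

/-- `{Γ₁} ∪ 𝒜` is a Frobenius partition of `Γ` if it is a partition of `Γ`, `Γ₁` is normal,
every `A ∈ 𝒜` is malnormal, and `𝒜` is closed under conjugation. -/
structure IsFrobeniusPartition {Γ : Type*} [Group Γ] (Γ₁ : Subgroup Γ)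
    (𝒜 : Set (Subgroup Γ)) : Prop where
  normal : Γ₁.Normal
  partition : IsGroupPartition (insert Γ₁ 𝒜)
  malnormal : ∀ A ∈ 𝒜, Malnormal A
  conj_mem : ∀ A ∈ 𝒜, ∀ g : Γ, ConjSubgroup g A ∈ 𝒜

/-- A partition is nontrivial if it contains at least two nontrivial subgroups. -/
def NontrivialGroupPartition {Γ : Type*} [Group Γ] (P : Set (Subgroup Γ)) : Prop :=
  ∃ A ∈ P, ∃ B ∈ P, A ≠ B ∧ A ≠ ⊥ ∧ B ≠ ⊥

/-! A nontrivial malnormal subgroup `A` is self-normalizing, so its conjugates correspond to the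
cosets of `A`; in a Frobenius partition distinct conjugates meet trivially, hence together they
contain `[Γ : A] (|A| - 1) = |Γ| - [Γ : A] ≥ |Γ| / 2` nonidentity elements. Two nonconjugate
nontrivial members of `𝒜` would thus account for more than the `|Γ| - 1` nonidentity elements, so
all nontrivial members of `𝒜` are conjugate. If `Γ₁` were trivial, the conjugates of one of them,
`A`, would cover `Γ`, forcing `[Γ : A] = 1`; but `A = Γ` leaves no room for a second nontrivial
member of the partition. -/

section

variable {Γ : Type*} [Group Γ]

theorem mem_conjSubgroup {g x : Γ} {A : Subgroup Γ} :
    x ∈ ConjSubgroup g A ↔ g * x * g⁻¹ ∈ A := by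
  simp only [ConjSubgroup, Subgroup.mem_map_equiv]
  simp [mul_assoc]

theorem conjSubgroup_one (A : Subgroup Γ) : ConjSubgroup 1 A = A := by
  ext
  simp [mem_conjSubgroup]

theorem conjSubgroup_conjSubgroup (g h : Γ) (A : Subgroup Γ) :
    ConjSubgroup g (ConjSubgroup h A) = ConjSubgroup (h * g) A := by
  ext x
  simp only [mem_conjSubgroup, mul_inv_rev, mul_assoc]

theorem conjSubgroup_eq_self_iff {g : Γ} {A : Subgroup Γ} :
    ConjSubgroup g A = A ↔ g ∈ Subgroup.normalizer A := by
  rw [Subgroup.mem_normalizer_iff, SetLike.ext_iff]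
  simp only [mem_conjSubgroup, Iff.comm]

theorem conjSubgroup_eq_conjSubgroup_iff {g h : Γ} {A : Subgroup Γ} :
    ConjSubgroup g A = ConjSubgroup h A ↔ g * h⁻¹ ∈ Subgroup.normalizer A := by
  rw [← conjSubgroup_eq_self_iff]
  constructor
  · intro e
    rw [← conjSubgroup_conjSubgroup, e, conjSubgroup_conjSubgroup, mul_inv_cancel,
      conjSubgroup_one]
  · intro e
    conv_rhs => rw [← e, conjSubgroup_conjSubgroup, inv_mul_cancel_right]

theorem Malnormal.normalizer_eq {A : Subgroup Γ} (hA : Malnormal A) (hA0 : A ≠ ⊥) :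
    Subgroup.normalizer A = A := by
  refine le_antisymm (fun g hg => ?_) Subgroup.le_normalizer
  by_contra hgA
  have h := hA g hgA
  rw [conjSubgroup_eq_self_iff.mpr hg, inf_idem] at h
  exact hA0 h

theorem Subgroup.two_mul_index_le_card [Finite Γ] {A : Subgroup Γ} (hA : A ≠ ⊥) :
    2 * A.index ≤ Nat.card Γ :=
  A.card_mul_index ▸ Nat.mul_le_mul_right _ ((Subgroup.one_lt_card_iff_ne_bot A).mpr hA)

theorem IsGroupPartition.eq_of_mem {P : Set (Subgroup Γ)} (hP : IsGroupPartition P) {x : Γ}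
    (hx : x ≠ 1) {A B : Subgroup Γ} (hA : A ∈ P) (hB : B ∈ P) (hxA : x ∈ A) (hxB : x ∈ B) :
    A = B :=
  (hP x hx).unique ⟨hA, hxA⟩ ⟨hB, hxB⟩

theorem IsGroupPartition.ne_top {P : Set (Subgroup Γ)} (hP : IsGroupPartition P)
    {A B : Subgroup Γ} (hA : A ∈ P) (hB : B ∈ P) (hAB : A ≠ B) (hB0 : B ≠ ⊥) : A ≠ ⊤ := by
  rintro rfl
  obtain ⟨b, hbB, hb1⟩ := B.bot_or_exists_ne_one.resolve_left hB0
  exact hAB (hP.eq_of_mem hb1 hA hB (Subgroup.mem_top b) hbB)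

namespace IsFrobeniusPartition

variable {Γ₁ A : Subgroup Γ} {𝒜 : Set (Subgroup Γ)}

theorem conjSubgroup_mem_insert (hF : IsFrobeniusPartition Γ₁ 𝒜) (hA : A ∈ 𝒜) (g : Γ) :
    ConjSubgroup g A ∈ insert Γ₁ 𝒜 :=
  Set.mem_insert_of_mem _ (hF.conj_mem A hA g)

theorem mem_conjSubgroup_iff_mul_inv_mem (hF : IsFrobeniusPartition Γ₁ 𝒜) (hA : A ∈ 𝒜)
    (hA0 : A ≠ ⊥) {x g₀ : Γ} (hx : x ≠ 1) (hx₀ : x ∈ ConjSubgroup g₀ A) (g : Γ) :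
    x ∈ ConjSubgroup g A ↔ g * g₀⁻¹ ∈ A := by
  conv_rhs => rw [← (hF.malnormal A hA).normalizer_eq hA0, ← conjSubgroup_eq_conjSubgroup_iff]
  exact ⟨fun hxg => hF.partition.eq_of_mem hx (hF.conjSubgroup_mem_insert hA g)
    (hF.conjSubgroup_mem_insert hA g₀) hxg hx₀, fun e => e ▸ hx₀⟩

end IsFrobeniusPartition

section conjUnion

open Finset

variable [Fintype Γ]

open Classical in
noncomputable def conjUnion (A : Subgroup Γ) : Finset Γ :=
  {x | x ≠ 1 ∧ ∃ g, x ∈ ConjSubgroup g A}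

@[simp]
theorem mem_conjUnion {A : Subgroup Γ} {x : Γ} :
    x ∈ conjUnion A ↔ x ≠ 1 ∧ ∃ g, x ∈ ConjSubgroup g A := by
  simp [conjUnion]

theorem conjUnion_subset_erase_one [DecidableEq Γ] (A : Subgroup Γ) :
    conjUnion A ⊆ univ.erase 1 :=
  fun x hx => mem_erase.mpr ⟨(mem_conjUnion.mp hx).1, mem_univ x⟩

theorem card_filter_mem_subgroup (A : Subgroup Γ) [DecidablePred (· ∈ A)] :
    #{x | x ∈ A} = Nat.card A := by
  rw [Nat.card_eq_fintype_card, Fintype.card_subtype]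

namespace IsFrobeniusPartition

variable {Γ₁ A C : Subgroup Γ} {𝒜 : Set (Subgroup Γ)}

theorem card_conjUnion_add_index (hF : IsFrobeniusPartition Γ₁ 𝒜) (hA : A ∈ 𝒜) (hA0 : A ≠ ⊥) :
    #(conjUnion A) + A.index = Nat.card Γ := by
  classical
  -- Each `g` is paired with the `|A| - 1` elements `1 ≠ x ∈ g⁻¹ A g`, and each such `x` with
  -- the `|A|` elements of a right coset of `A`.
  have hdouble : #(univ : Finset Γ) * (Nat.card A - 1) = #(conjUnion A) * Nat.card A := by
    refine card_mul_eq_card_mul (fun g x => x ∈ ConjSubgroup g A) (fun g _ => ?_)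
      (fun x hx => ?_)
    · rw [← card_filter_mem_subgroup, ← card_erase_of_mem (a := 1) (by simp [A.one_mem])]
      refine card_equiv (MulAut.conj g).toEquiv fun x => ?_
      simp only [bipartiteAbove, mem_filter, mem_conjUnion, mem_erase, mem_univ, true_and,
        MulEquiv.toEquiv_eq_coe, MulEquiv.coe_toEquiv, MulAut.conj_apply, mem_conjSubgroup,
        ne_eq, conj_eq_one_iff]
      exact ⟨fun h => ⟨h.1.1, h.2⟩, fun h => ⟨⟨h.1, g, h.2⟩, h.2⟩⟩
    · obtain ⟨hx1, g₀, hx₀⟩ := mem_conjUnion.mp hx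
      rw [← card_filter_mem_subgroup]
      refine card_equiv (Equiv.mulRight g₀⁻¹) fun g => ?_
      simp [bipartiteBelow, hF.mem_conjSubgroup_iff_mul_inv_mem hA hA0 hx1 hx₀]
  have hA1 := (Subgroup.one_lt_card_iff_ne_bot A).mpr hA0
  obtain ⟨k, hk⟩ : ∃ k, Nat.card A = k + 1 := ⟨Nat.card A - 1, by omega⟩
  rw [card_univ, ← Nat.card_eq_fintype_card, ← A.card_mul_index, hk, Nat.add_sub_cancel]
    at hdouble
  have hcard : #(conjUnion A) = A.index * k :=
    Nat.eq_of_mul_eq_mul_right (m := k + 1) (by omega) (by rw [← hdouble]; ring)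
  rw [← A.card_mul_index, hk, hcard]
  ring

theorem disjoint_conjUnion (hF : IsFrobeniusPartition Γ₁ 𝒜) (hA : A ∈ 𝒜) (hC : C ∈ 𝒜)
    (hAC : ∀ g, ConjSubgroup g A ≠ C) : Disjoint (conjUnion A) (conjUnion C) := by
  refine disjoint_left.mpr fun y hyA hyC => ?_
  obtain ⟨hy1, g, hyg⟩ := mem_conjUnion.mp hyA
  obtain ⟨-, h, hyh⟩ := mem_conjUnion.mp hyC
  have e := hF.partition.eq_of_mem hy1 (hF.conjSubgroup_mem_insert hA g)
    (hF.conjSubgroup_mem_insert hC h) hyg hyh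
  apply hAC (g * h⁻¹)
  rw [← conjSubgroup_conjSubgroup, e, conjSubgroup_conjSubgroup, mul_inv_cancel, conjSubgroup_one]

theorem exists_conjSubgroup_eq (hF : IsFrobeniusPartition Γ₁ 𝒜) (hA : A ∈ 𝒜) (hA0 : A ≠ ⊥)
    (hC : C ∈ 𝒜) (hC0 : C ≠ ⊥) : ∃ g, ConjSubgroup g A = C := by
  classical
  by_contra! hAC
  have hunion := card_le_card (union_subset (conjUnion_subset_erase_one A)
    (conjUnion_subset_erase_one C))
  rw [card_union_of_disjoint (hF.disjoint_conjUnion hA hC hAC), card_erase_of_mem (mem_univ 1),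
    card_univ, ← Nat.card_eq_fintype_card] at hunion
  have := hF.card_conjUnion_add_index hA hA0
  have := hF.card_conjUnion_add_index hC hC0
  have := A.two_mul_index_le_card hA0
  have := C.two_mul_index_le_card hC0
  have := Nat.card_pos (α := Γ)
  omega

end IsFrobeniusPartition

end conjUnion

end

open Finset in
/-- For a nontrivial Frobenius partition `{Γ₁} ∪ 𝒜` of a finite group `Γ`, the normal
subgroup `Γ₁` is nontrivial. -/
theorem kernel_nontrivial {Γ : Type*} [Group Γ] [Finite Γ]
    (Γ₁ : Subgroup Γ) (𝒜 : Set (Subgroup Γ)) (hF : IsFrobeniusPartition Γ₁ 𝒜)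
    (hnt : NontrivialGroupPartition (insert Γ₁ 𝒜)) :
    Γ₁ ≠ ⊥ := by
  classical
  have := Fintype.ofFinite Γ
  intro hbot
  have mem_𝒜 : ∀ D ∈ insert Γ₁ 𝒜, D ≠ ⊥ → D ∈ 𝒜 := fun D hD hD0 =>
    hD.resolve_left fun h => hD0 (h.trans hbot)
  obtain ⟨A, hAP, B, hBP, hAB, hA0, hB0⟩ := hnt
  have hA := mem_𝒜 A hAP hA0
  have hcover : conjUnion A = univ.erase 1 := by
    refine (conjUnion_subset_erase_one A).antisymm fun x hx => ?_
    have hx1 : x ≠ 1 := (mem_erase.mp hx).1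
    obtain ⟨C, ⟨hCP, hxC⟩, -⟩ := hF.partition x hx1
    have hC0 : C ≠ ⊥ := fun h => hx1 (Subgroup.mem_bot.mp (h ▸ hxC))
    obtain ⟨g, rfl⟩ := hF.exists_conjSubgroup_eq hA hA0 (mem_𝒜 C hCP hC0) hC0
    exact mem_conjUnion.mpr ⟨hx1, g, hxC⟩
  have hcard := hF.card_conjUnion_add_index hA hA0
  rw [hcover, card_erase_of_mem (mem_univ 1), card_univ, ← Nat.card_eq_fintype_card] at hcard
  have hindex : A.index = 1 := by
    have := Nat.card_pos (α := Γ)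
    omega
  exact hF.partition.ne_top hAP hBP hAB hB0 (Subgroup.index_eq_one.mp hindex)
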